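/- arXiv:1509.02511 — 4 statements merged into one kernel-verified Lean document; each statement's English description precedes it below -/
import Mathlib

section
/- Let X(t) be a symmetric truncated birth-death process on {0,1,...,2s} with absorbing endpoints 0 and 2s. Then for k, n both in {1,...,s−1} or both in {s+1,...,2s−1}, the s-avoiding transition probability satisfies p^⟨s⟩_{k,n}(t) = p_{k,n}(t) − (x_k/x_s) p_{2s−k,n}(t) for all t ≥ 0. -/
/-!
Reflection through `s` gives `p_{s,n} = (x_{2s-n}/x_s) p_{s,2s-n}`, so the renewal integral
`∫₀ᵗ g(θ) p_{s,n}(t-θ) dθ` equals `(x_{2s-n}/x_s) ∫₀ᵗ g(θ) p_{s,2s-n}(t-θ) dθ`. As `2s-n` lies on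
the other side of `s` from `k`, the last integral is `p_{k,2s-n}(t)` by the renewal equation, and
reflecting once more gives `p_{k,2s-n}(t) = (x_k/x_{2s-n}) p_{2s-k,n}(t)`.
-/

/-- `p` is a solution of the forward Kolmogorov equations of the truncated
birth-death process on `{0,…,N}` with absorbing endpoints `0` and `N`. -/
def IsAbsorbingBDSolution (N : ℕ) (lam mu : ℕ → ℝ) (p : ℕ → ℕ → ℝ → ℝ) : Prop :=
  (∀ k t, HasDerivAt (p k 0) (mu 1 * p k 1 t) t) ∧
  (∀ k n, 1 ≤ n → n ≤ N - 1 → ∀ t, HasDerivAt (p k n)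
      (lam (n-1) * p k (n-1) t - (lam n + mu n) * p k n t + mu (n+1) * p k (n+1) t) t) ∧
  (∀ k n, p k n 0 = if k = n then 1 else 0)

def IsReflectionSymmetric (s : ℕ) (x : ℕ → ℝ) (p : ℕ → ℕ → ℝ → ℝ) : Prop :=
  ∀ k n, 1 ≤ k → k ≤ 2*s - 1 → n ≤ 2*s → ∀ t, 0 ≤ t →
    p (2*s - k) (2*s - n) t = (x n / x k) * p k n t

theorem IsReflectionSymmetric.reflect_target {s : ℕ} {x : ℕ → ℝ} {p : ℕ → ℕ → ℝ → ℝ}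
    (hp : IsReflectionSymmetric s x p) {k n : ℕ} (hk1 : 1 ≤ k) (hk2 : k ≤ 2*s - 1)
    (hn : n ≤ 2*s) {t : ℝ} (ht : 0 ≤ t) :
    p (2*s - k) n t = (x (2*s - n) / x k) * p k (2*s - n) t := by
  have h := hp k (2*s - n) hk1 hk2 (Nat.sub_le _ _) t ht
  rwa [Nat.sub_sub_self hn] at h

theorem IsReflectionSymmetric.reflect_target_center {s : ℕ} {x : ℕ → ℝ}
    {p : ℕ → ℕ → ℝ → ℝ} (hp : IsReflectionSymmetric s x p) (hs : 1 ≤ s) {n : ℕ}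
    (hn : n ≤ 2*s) {t : ℝ} (ht : 0 ≤ t) :
    p s n t = (x (2*s - n) / x s) * p s (2*s - n) t := by
  have h := hp.reflect_target (k := s) hs (by omega) hn ht
  rwa [show 2*s - s = s by omega] at h

theorem pos_of_eq_mul_prev {x r : ℕ → ℝ} {M : ℕ} (hx0 : 0 < x 0)
    (hr : ∀ n, 1 ≤ n → n ≤ M → 0 < r n)
    (hrec : ∀ n, 1 ≤ n → n ≤ M → x n = r n * x (n - 1)) :
    ∀ m, m ≤ M → 0 < x m := by
  intro m
  induction m with
  | zero => exact fun _ => hx0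
  | succ m ih =>
    intro hm
    rw [hrec (m + 1) (by omega) hm, Nat.add_sub_cancel]
    exact mul_pos (hr (m + 1) (by omega) hm) (ih (by omega))

theorem intervalIntegral_mul_comp_sub_eq_const_mul {g f h : ℝ → ℝ} {c t : ℝ} (ht : 0 ≤ t)
    (hfh : ∀ τ, 0 ≤ τ → f τ = c * h τ) :
    ∫ θ in (0:ℝ)..t, g θ * f (t - θ) = c * ∫ θ in (0:ℝ)..t, g θ * h (t - θ) := by
  rw [← intervalIntegral.integral_const_mul]
  refine intervalIntegral.integral_congr fun θ hθ => ?_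
  rw [Set.uIcc_of_le ht] at hθ
  simp only [hfh (t - θ) (by linarith [hθ.2])]
  ring

theorem avoiding_transition_probability_absorbing_general
    (s : ℕ) (hs : 1 < s) (lam mu : ℕ → ℝ)
    (hpos : ∀ n, 1 ≤ n → n ≤ 2*s - 1 → 0 < lam n ∧ 0 < mu n)
    (p : ℕ → ℕ → ℝ → ℝ)
    (x : ℕ → ℝ) (hx0 : x 0 = 1)
    (hxrec : ∀ n, 1 ≤ n → n ≤ 2*s - 1 → x n = (mu n / lam (2*s - n)) * x (n - 1))
    -- the process is symmetric:
    (hsymm : ∀ k n, 1 ≤ k → k ≤ 2*s - 1 → n ≤ 2*s → ∀ t, 0 ≤ t →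
      p (2*s - k) (2*s - n) t = (x n / x k) * p k n t)
    (k n : ℕ)
    (hside : (1 ≤ k ∧ k ≤ s - 1 ∧ 1 ≤ n ∧ n ≤ s - 1) ∨
             (s + 1 ≤ k ∧ k ≤ 2*s - 1 ∧ s + 1 ≤ n ∧ n ≤ 2*s - 1))
    (g : ℝ → ℝ)
    -- `g` is the FPT density from `k` through `s`, via the renewal equation
    -- (upward if `k < s`, downward if `k > s`):
    (hgup : k < s → ∀ m, s ≤ m → m ≤ 2*s → ∀ t, 0 ≤ t →
      p k m t = ∫ θ in (0:ℝ)..t, g θ * p s m (t - θ))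
    (hgdown : s < k → ∀ m, m ≤ s → ∀ t, 0 ≤ t →
      p k m t = ∫ θ in (0:ℝ)..t, g θ * p s m (t - θ))
    (pav : ℝ → ℝ)
    -- the `s`-avoiding transition probability:
    (hpav : ∀ t, 0 ≤ t → pav t = p k n t - ∫ θ in (0:ℝ)..t, g θ * p s n (t - θ)) :
    ∀ t, 0 ≤ t → pav t = p k n t - (x k / x s) * p (2*s - k) n t := by
  intro t ht
  have hsymm : IsReflectionSymmetric s x p := hsymm
  have hx : ∀ m, m ≤ 2*s - 1 → 0 < x m :=
    pos_of_eq_mul_prev (hx0 ▸ one_pos)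
      (fun m hm1 hm2 => div_pos (hpos m hm1 hm2).2 (hpos (2*s - m) (by omega) (by omega)).1)
      hxrec
  obtain ⟨hk1, hk2, hn⟩ : 1 ≤ k ∧ k ≤ 2*s - 1 ∧ n ≤ 2*s := by omega
  have hrenewal : p k (2*s - n) t = ∫ θ in (0:ℝ)..t, g θ * p s (2*s - n) (t - θ) := by
    rcases hside with h | h
    · exact hgup (by omega) (2*s - n) (by omega) (by omega) t ht
    · exact hgdown (by omega) (2*s - n) (by omega) t ht
  rw [hpav t ht, intervalIntegral_mul_comp_sub_eq_const_mul ht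
      (fun τ hτ => hsymm.reflect_target_center hs.le hn hτ),
    ← hrenewal, hsymm.reflect_target hk1 hk2 hn ht]
  have := (hx k hk2).ne'
  have := (hx s (by omega)).ne'
  field_simp

theorem avoiding_transition_probability_absorbing
    (s : ℕ) (hs : 1 < s) (lam mu : ℕ → ℝ)
    (hlam0 : lam 0 = 0) (hmu0 : mu 0 = 0) (hlamN : lam (2*s) = 0) (hmuN : mu (2*s) = 0)
    (hpos : ∀ n, 1 ≤ n → n ≤ 2*s - 1 → 0 < lam n ∧ 0 < mu n)
    (p : ℕ → ℕ → ℝ → ℝ)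
    (hsol : IsAbsorbingBDSolution (2*s) lam mu p)
    (x : ℕ → ℝ) (hx0 : x 0 = 1)
    (hxrec : ∀ n, 1 ≤ n → n ≤ 2*s - 1 → x n = (mu n / lam (2*s - n)) * x (n - 1))
    -- the process is symmetric:
    (hsymm : ∀ k n, 1 ≤ k → k ≤ 2*s - 1 → n ≤ 2*s → ∀ t, 0 ≤ t →
      p (2*s - k) (2*s - n) t = (x n / x k) * p k n t)
    (k n : ℕ)
    (hside : (1 ≤ k ∧ k ≤ s - 1 ∧ 1 ≤ n ∧ n ≤ s - 1) ∨
             (s + 1 ≤ k ∧ k ≤ 2*s - 1 ∧ s + 1 ≤ n ∧ n ≤ 2*s - 1))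
    (g : ℝ → ℝ)
    -- `g` is the FPT density from `k` through `s`, via the renewal equation
    -- (upward if `k < s`, downward if `k > s`):
    (hgup : k < s → ∀ m, s ≤ m → m ≤ 2*s → ∀ t, 0 ≤ t →
      p k m t = ∫ θ in (0:ℝ)..t, g θ * p s m (t - θ))
    (hgdown : s < k → ∀ m, m ≤ s → ∀ t, 0 ≤ t →
      p k m t = ∫ θ in (0:ℝ)..t, g θ * p s m (t - θ))
    (pav : ℝ → ℝ)
    -- the `s`-avoiding transition probability:
    (hpav : ∀ t, 0 ≤ t → pav t = p k n t - ∫ θ in (0:ℝ)..t, g θ * p s n (t - θ)) :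
    ∀ t, 0 ≤ t → pav t = p k n t - (x k / x s) * p (2*s - k) n t :=
  avoiding_transition_probability_absorbing_general s hs lam mu hpos p x hx0 hxrec hsymm k n hside g
    hgup hgdown pav hpav
end

section
/- Let p_{k,n}(t) = e^{−(λ+μ)t} (λ/μ)^{(n−k)/2} Σ_{j=−∞}^{∞} [I_{n−k−2jN}(2t√(λμ)) − I_{n+k−2(j+1)N}(2t√(λμ))] for 1 ≤ k,n ≤ N−1, where I_ν is the modified Bessel function of the first kind. Then these functions satisfy the forward Kolmogorov equations d/dt p_{k,n}(t) = λ p_{k,n−1}(t) − (λ+μ) p_{k,n}(t) + μ p_{k,n+1}(t) for 2 ≤ n ≤ N−2, and p_{k,n}(0) = δ_{k,n}. -/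
/-- The modified Bessel function of the first kind of integer order
(`besselI (-m) = besselI m`). -/
noncomputable def besselI (m : ℤ) (x : ℝ) : ℝ :=
  ∑' i : ℕ, (x / 2) ^ (m.natAbs + 2 * i) /
    ((Nat.factorial i : ℝ) * (Nat.factorial (m.natAbs + i) : ℝ))

/-- The transition probability of the truncated birth-death process on `{0,…,N}` with
constant rates `λ, μ` and absorbing endpoints. -/
noncomputable def pconst (lam mu : ℝ) (N : ℕ) (k n : ℤ) (t : ℝ) : ℝ :=
  Real.exp (-(lam + mu) * t) * (lam / mu) ^ (((n : ℝ) - (k : ℝ)) / 2) *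
    ∑' j : ℤ, (besselI (n - k - 2 * j * N) (2 * t * Real.sqrt (lam * mu)) -
               besselI (n + k - 2 * (j + 1) * N) (2 * t * Real.sqrt (lam * mu)))


/-!
Differentiating the series of `I_m` termwise gives `I_m' = (I_{m-1} + I_{m+1}) / 2`, and
`|I_m x| ≤ (R/2)^|m| / |m|! · exp ((R/2)^2)` on `|x| ≤ R`, which is summable over any injective
family of orders. Hence the recurrence passes to the periodic sums
`S_c = ∑_j I_{c - 2jN}` and to the image sums `S_{n-k} - S_{n+k-2N}`. Under `x = 2t√(λμ)` the
chain-rule factor `√(λμ)` is absorbed by `λ (λ/μ)^(-1/2) = μ (λ/μ)^(1/2) = √(λμ)`, giving the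
forward equation. At `t = 0` only `I_0(0) = 1` survives, and since `|n - k| < N` and
`0 < n + k < 2N`, only the term `j = 0` of the first sum contributes, and only when `k = n`.
-/

open Real Nat

theorem hasDerivAt_tsum_of_forall_abs_le {ι : Type*} {f f' : ι → ℝ → ℝ} (u : ℝ → ι → ℝ)
    (hu : ∀ R, Summable (u R)) (hf : ∀ i y, HasDerivAt (f i) (f' i y) y)
    (hf' : ∀ R i y, |y| ≤ R → |f' i y| ≤ u R i) {x : ℝ} (hfx : Summable fun i => f i x) :
    HasDerivAt (fun y => ∑' i, f i y) (∑' i, f' i x) x := by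
  have hx : x ∈ Metric.ball x 1 := Metric.mem_ball_self one_pos
  refine hasDerivAt_tsum_of_isPreconnected (hu (|x| + 1)) Metric.isOpen_ball
    (convex_ball x 1).isPreconnected (fun i y _ => hf i y) (fun i y hy => ?_) hx hfx hx
  rw [Real.norm_eq_abs]
  refine hf' _ i y ?_
  rw [Metric.mem_ball, Real.dist_eq] at hy
  linarith [abs_sub_abs_le_abs_sub y x]

noncomputable def besselTerm (n i : ℕ) (x : ℝ) : ℝ :=
  (x / 2) ^ (n + 2 * i) / (i ! * (n + i)! : ℝ)

theorem besselI_eq_tsum_besselTerm (m : ℤ) (x : ℝ) :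
    besselI m x = ∑' i, besselTerm m.natAbs i x := rfl

theorem abs_besselTerm_le {x R : ℝ} (hx : |x| ≤ R) (n i : ℕ) :
    |besselTerm n i x| ≤ (R / 2) ^ n / n ! * ((R / 2) ^ 2) ^ i / i ! := by
  have hfact : (n ! * i ! : ℝ) ≤ i ! * (n + i)! := by
    rw [mul_comm]; gcongr; omega
  have hx2 : |x / 2| ≤ R / 2 := by rw [abs_div, abs_two]; gcongr
  have hR : 0 ≤ R / 2 := (abs_nonneg _).trans hx2
  calc |besselTerm n i x| = |x / 2| ^ (n + 2 * i) / (i ! * (n + i)! : ℝ) := by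
        rw [besselTerm, abs_div, abs_pow, abs_of_pos (by positivity : (0 : ℝ) < i ! * (n + i)!)]
    _ ≤ (R / 2) ^ (n + 2 * i) / (n ! * i ! : ℝ) := by gcongr
    _ = (R / 2) ^ n / n ! * ((R / 2) ^ 2) ^ i / i ! := by
        rw [pow_add, pow_mul]; field_simp

theorem summable_besselTerm_majorant (n : ℕ) (R : ℝ) :
    Summable fun i : ℕ => (R / 2) ^ n / n ! * ((R / 2) ^ 2) ^ i / i ! := by
  simpa only [mul_div_assoc] using (Real.summable_pow_div_factorial _).mul_left _

theorem summable_besselTerm (n : ℕ) (x : ℝ) : Summable fun i => besselTerm n i x :=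
  .of_norm_bounded (summable_besselTerm_majorant n |x|) fun i =>
    abs_besselTerm_le le_rfl n i

theorem abs_besselI_le {x R : ℝ} (hx : |x| ≤ R) (m : ℤ) :
    |besselI m x| ≤ (R / 2) ^ m.natAbs / m.natAbs ! * exp ((R / 2) ^ 2) := by
  have hexp : HasSum (fun i : ℕ => ((R / 2) ^ 2) ^ i / i !) (exp ((R / 2) ^ 2)) := by
    rw [Real.exp_eq_exp_ℝ]; exact NormedSpace.expSeries_div_hasSum_exp _
  rw [besselI_eq_tsum_besselTerm, ← Real.norm_eq_abs]
  refine tsum_of_norm_bounded ?_ fun i => abs_besselTerm_le hx _ i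
  simpa only [mul_div_assoc] using hexp.mul_left _

theorem hasDerivAt_besselTerm (n i : ℕ) (x : ℝ) :
    HasDerivAt (besselTerm n i)
      ((n + 2 * i : ℕ) * (x / 2) ^ (n + 2 * i - 1) * (1 / 2) / (i ! * (n + i)! : ℝ)) x :=
  (((hasDerivAt_id x).div_const 2).pow (n + 2 * i)).div_const _

theorem hasDerivAt_besselTerm_zero_succ (i : ℕ) (x : ℝ) :
    HasDerivAt (besselTerm 0 (i + 1)) (besselTerm 1 i x) x := by
  convert hasDerivAt_besselTerm 0 (i + 1) x using 1
  rw [besselTerm, show 0 + 2 * (i + 1) - 1 = 1 + 2 * i by omega, zero_add, zero_add,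
    Nat.factorial_succ, add_comm 1 i, Nat.factorial_succ]
  push_cast
  field_simp

theorem hasDerivAt_besselTerm_succ_zero (n : ℕ) (x : ℝ) :
    HasDerivAt (besselTerm (n + 1) 0) (besselTerm n 0 x / 2) x := by
  convert hasDerivAt_besselTerm (n + 1) 0 x using 1
  rw [besselTerm, show n + 1 + 2 * 0 - 1 = n + 2 * 0 by omega, add_zero, add_zero,
    Nat.factorial_succ]
  push_cast
  field_simp
  ring

theorem hasDerivAt_besselTerm_succ_succ (n i : ℕ) (x : ℝ) :
    HasDerivAt (besselTerm (n + 1) (i + 1))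
      ((besselTerm n (i + 1) x + besselTerm (n + 2) i x) / 2) x := by
  convert hasDerivAt_besselTerm (n + 1) (i + 1) x using 1
  rw [besselTerm, besselTerm, show n + 1 + 2 * (i + 1) - 1 = n + 2 * (i + 1) by omega,
    show n + 2 + 2 * i = n + 2 * (i + 1) by omega, show n + 1 + (i + 1) = n + (i + 1) + 1 by omega,
    show n + 2 + i = n + (i + 1) + 1 by omega, Nat.factorial_succ (n + (i + 1)),
    Nat.factorial_succ i]
  push_cast
  field_simp
  ring

theorem besselI_natCast_eq_add_tsum (n : ℕ) (x : ℝ) :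
    besselI n x = besselTerm n 0 x + ∑' i, besselTerm n (i + 1) x :=
  (summable_besselTerm n x).tsum_eq_zero_add

theorem summable_besselTerm_majorant_succ (n : ℕ) (R : ℝ) :
    Summable fun i : ℕ => (R / 2) ^ n / n ! * ((R / 2) ^ 2) ^ (i + 1) / (i + 1)! := by
  simpa only [Nat.cast_add, Nat.cast_one] using
    (summable_nat_add_iff 1).mpr (summable_besselTerm_majorant n R)

theorem hasDerivAt_besselI_zero (x : ℝ) : HasDerivAt (besselI 0) (besselI 1 x) x := by
  have h := hasDerivAt_tsum_of_forall_abs_le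
    (fun R i => (R / 2) ^ 1 / 1 ! * ((R / 2) ^ 2) ^ i / i !)
    (summable_besselTerm_majorant 1) (fun i y => hasDerivAt_besselTerm_zero_succ i y)
    (fun R i y hy => abs_besselTerm_le hy 1 i) ((summable_nat_add_iff 1).mpr
      (summable_besselTerm 0 x))
  have h0 : besselI 0 = fun y => 1 + ∑' i, besselTerm 0 (i + 1) y := by
    funext y; exact (besselI_natCast_eq_add_tsum 0 y).trans (by simp [besselTerm])
  rw [h0]
  exact h.const_add 1

theorem hasDerivAt_besselI_natCast_succ (n : ℕ) (x : ℝ) :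
    HasDerivAt (besselI (n + 1)) ((besselI n x + besselI (n + 2) x) / 2) x := by
  have h := hasDerivAt_tsum_of_forall_abs_le
    (fun R i => ((R / 2) ^ n / n ! * ((R / 2) ^ 2) ^ (i + 1) / (i + 1)! +
      (R / 2) ^ (n + 2) / (n + 2)! * ((R / 2) ^ 2) ^ i / i !) / 2)
    (fun R => ((summable_besselTerm_majorant_succ n R).add
      (summable_besselTerm_majorant (n + 2) R)).div_const 2)
    (fun i y => hasDerivAt_besselTerm_succ_succ n i y)
    (fun R i y hy => by
      rw [abs_div, abs_two]
      gcongr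
      exact (abs_add_le _ _).trans
        (add_le_add (abs_besselTerm_le hy n (i + 1)) (abs_besselTerm_le hy (n + 2) i)))
    ((summable_nat_add_iff 1).mpr (summable_besselTerm (n + 1) x))
  have h1 : besselI (n + 1) =
      fun y => besselTerm (n + 1) 0 y + ∑' i, besselTerm (n + 1) (i + 1) y :=
    funext (besselI_natCast_eq_add_tsum (n + 1))
  rw [h1]
  refine ((hasDerivAt_besselTerm_succ_zero n x).add h).congr_deriv ?_
  rw [tsum_div_const, (summable_nat_add_iff 1 |>.mpr (summable_besselTerm n x)).tsum_add
    (summable_besselTerm (n + 2) x), besselI_natCast_eq_add_tsum n]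
  change _ = (_ + _ + ∑' i, besselTerm (n + 2) i x) / 2
  ring

theorem besselI_neg (m : ℤ) : besselI (-m) = besselI m := by
  funext x; simp only [besselI, Int.natAbs_neg]

theorem hasDerivAt_besselI (m : ℤ) (x : ℝ) :
    HasDerivAt (besselI m) ((besselI (m - 1) x + besselI (m + 1) x) / 2) x := by
  have hnat : ∀ n : ℕ, HasDerivAt (besselI n) ((besselI (n - 1) x + besselI (n + 1) x) / 2) x
    | 0 => by simpa [besselI_neg] using hasDerivAt_besselI_zero x
    | n + 1 => by simpa [add_assoc] using hasDerivAt_besselI_natCast_succ n x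
  obtain ⟨n, rfl | rfl⟩ := m.eq_nat_or_neg
  · exact hnat n
  · rw [besselI_neg, show -(n : ℤ) - 1 = -(n + 1) by ring, show -(n : ℤ) + 1 = -(n - 1) by ring,
      besselI_neg, besselI_neg, add_comm]
    exact hnat n

theorem besselI_apply_zero (m : ℤ) : besselI m 0 = if m = 0 then 1 else 0 := by
  rw [besselI_eq_tsum_besselTerm, tsum_eq_single 0 fun i hi => by simp [besselTerm, hi]]
  by_cases hm : m = 0 <;> simp [besselTerm, hm]

theorem summable_pow_natAbs_div_factorial (c : ℝ) :
    Summable fun m : ℤ => c ^ m.natAbs / m.natAbs ! :=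
  .of_nat_of_neg (by simpa using Real.summable_pow_div_factorial c)
    (by simpa using Real.summable_pow_div_factorial c)

theorem summable_besselI_comp {e : ℤ → ℤ} (he : Function.Injective e) (x : ℝ) :
    Summable fun j => besselI (e j) x :=
  .of_norm_bounded
    (((summable_pow_natAbs_div_factorial (|x| / 2)).comp_injective he).mul_right _)
    fun j => abs_besselI_le le_rfl (e j)

theorem hasDerivAt_tsum_besselI_comp {e : ℤ → ℤ} (he : Function.Injective e) (x : ℝ) :
    HasDerivAt (fun y => ∑' j, besselI (e j) y)
      ((∑' j, besselI (e j - 1) x + ∑' j, besselI (e j + 1) x) / 2) x := by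
  have hsub : Function.Injective fun j => e j - 1 := fun a b h => he (by simpa using h)
  have hadd : Function.Injective fun j => e j + 1 := fun a b h => he (by simpa using h)
  have hmaj : ∀ R : ℝ,
      Summable fun m : ℤ => (R / 2) ^ m.natAbs / m.natAbs ! * exp ((R / 2) ^ 2) :=
    fun R => (summable_pow_natAbs_div_factorial _).mul_right _
  refine (hasDerivAt_tsum_of_forall_abs_le
    (fun R j => ((R / 2) ^ (e j - 1).natAbs / (e j - 1).natAbs ! * exp ((R / 2) ^ 2) +
      (R / 2) ^ (e j + 1).natAbs / (e j + 1).natAbs ! * exp ((R / 2) ^ 2)) / 2)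
    (fun R => (((hmaj R).comp_injective hsub).add ((hmaj R).comp_injective hadd)).div_const 2)
    (fun j y => hasDerivAt_besselI (e j) y)
    (fun R j y hy => by
      rw [abs_div, abs_two]
      gcongr
      exact (abs_add_le _ _).trans
        (add_le_add (abs_besselI_le hy (e j - 1)) (abs_besselI_le hy (e j + 1))))
    (summable_besselI_comp he x)).congr_deriv ?_
  rw [tsum_div_const, (summable_besselI_comp hsub x).tsum_add (summable_besselI_comp hadd x)]

noncomputable def besselPeriodicSum (N : ℕ) (c : ℤ) (x : ℝ) : ℝ :=
  ∑' j : ℤ, besselI (c - 2 * j * N) x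

section PeriodicSum

variable {N : ℕ}

theorem injective_sub_two_mul_mul (hN : N ≠ 0) (c : ℤ) :
    Function.Injective fun j : ℤ => c - 2 * j * N := fun a b h => by
  have hN' : (N : ℤ) ≠ 0 := by exact_mod_cast hN
  have : 2 * a * N = 2 * b * N := by simpa using h
  have := mul_right_cancel₀ hN' this
  omega

theorem hasDerivAt_besselPeriodicSum (hN : N ≠ 0) (c : ℤ) (x : ℝ) :
    HasDerivAt (besselPeriodicSum N c)
      ((besselPeriodicSum N (c - 1) x + besselPeriodicSum N (c + 1) x) / 2) x := by
  have h := hasDerivAt_tsum_besselI_comp (injective_sub_two_mul_mul hN c) x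
  simp only [sub_right_comm c _ (1 : ℤ), sub_add_eq_add_sub] at h
  exact h

theorem besselPeriodicSum_apply_zero (hN : N ≠ 0) (c : ℤ) :
    besselPeriodicSum N c 0 = if (2 * N : ℤ) ∣ c then 1 else 0 := by
  simp only [besselPeriodicSum, besselI_apply_zero]
  split_ifs with hc
  · obtain ⟨q, rfl⟩ := hc
    have hq : ∀ j : ℤ, 2 * N * q - 2 * j * N = 0 ↔ j = q := fun j => by
      rw [show (0 : ℤ) = 2 * N * q - 2 * q * N by ring]
      exact (injective_sub_two_mul_mul hN _).eq_iff
    simp only [hq, tsum_ite_eq]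
  · have hj : ∀ j : ℤ, c - 2 * j * N ≠ 0 := fun j h => hc ⟨j, by linarith⟩
    simp [hj]

end PeriodicSum

noncomputable def besselImageSum (N : ℕ) (k n : ℤ) (x : ℝ) : ℝ :=
  besselPeriodicSum N (n - k) x - besselPeriodicSum N (n + k - 2 * N) x

section ImageSum

variable {N : ℕ}

theorem hasDerivAt_besselImageSum (hN : N ≠ 0) (k n : ℤ) (x : ℝ) :
    HasDerivAt (besselImageSum N k n)
      ((besselImageSum N k (n - 1) x + besselImageSum N k (n + 1) x) / 2) x := by
  refine ((hasDerivAt_besselPeriodicSum hN (n - k) x).sub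
    (hasDerivAt_besselPeriodicSum hN (n + k - 2 * N) x)).congr_deriv ?_
  simp only [besselImageSum]
  ring_nf

theorem besselImageSum_apply_zero {k n : ℤ} (hk : 1 ≤ k) (hkN : k ≤ N - 1) (hn : 1 ≤ n)
    (hnN : n ≤ N - 1) : besselImageSum N k n 0 = if k = n then 1 else 0 := by
  have hN : N ≠ 0 := by omega
  have hdiff : (2 * N : ℤ) ∣ n - k ↔ k = n := by
    refine ⟨fun h => ?_, fun h => by simp [h]⟩
    have := Int.eq_zero_of_abs_lt_dvd h (by rw [abs_lt]; omega)
    omega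
  have hsum : ¬ (2 * N : ℤ) ∣ n + k - 2 * N := fun h => by
    have := Int.eq_zero_of_dvd_of_nonneg_of_lt (by omega) (by omega)
      ((dvd_sub_self_right).mp h)
    omega
  simp only [besselImageSum, besselPeriodicSum_apply_zero hN, hdiff, hsum, if_false, sub_zero]

theorem pconst_eq_besselImageSum (lam mu : ℝ) (hN : N ≠ 0) (k n : ℤ) (t : ℝ) :
    pconst lam mu N k n t = exp (-(lam + mu) * t) * (lam / mu) ^ (((n : ℝ) - k) / 2) *
      besselImageSum N k n (2 * t * √(lam * mu)) := by
  rw [pconst, besselImageSum, besselPeriodicSum, besselPeriodicSum,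
    ← (summable_besselI_comp (injective_sub_two_mul_mul hN _) _).tsum_sub
      (summable_besselI_comp (injective_sub_two_mul_mul hN _) _)]
  congr 2
  funext j
  ring_nf

end ImageSum

theorem mul_div_rpow_neg_half {a b : ℝ} (ha : 0 < a) (hb : 0 < b) :
    a * (a / b) ^ (-(1 / 2) : ℝ) = √(a * b) := by
  rw [Real.rpow_neg (div_pos ha hb).le, ← Real.sqrt_eq_rpow, Real.sqrt_div ha.le, inv_div,
    Real.sqrt_mul ha.le]
  have : 0 < √a := Real.sqrt_pos.mpr ha
  field_simp
  exact (Real.sq_sqrt ha.le).symm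

theorem mul_div_rpow_half {a b : ℝ} (ha : 0 < a) (hb : 0 < b) :
    b * (a / b) ^ (1 / 2 : ℝ) = √(a * b) := by
  rw [← Real.sqrt_eq_rpow, Real.sqrt_div ha.le, Real.sqrt_mul ha.le]
  have : 0 < √b := Real.sqrt_pos.mpr hb
  field_simp
  exact (Real.sq_sqrt hb.le).symm

theorem hasDerivAt_pconst {lam mu : ℝ} (hlam : 0 < lam) (hmu : 0 < mu) {N : ℕ} (hN : N ≠ 0)
    (k n : ℤ) (t : ℝ) :
    HasDerivAt (fun u => pconst lam mu N k n u)
      (lam * pconst lam mu N k (n - 1) t - (lam + mu) * pconst lam mu N k n t +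
        mu * pconst lam mu N k (n + 1) t) t := by
  simp only [pconst_eq_besselImageSum lam mu hN]
  set s := √(lam * mu)
  set r := lam / mu
  have hr : 0 < r := div_pos hlam hmu
  have hE : HasDerivAt (fun u => exp (-(lam + mu) * u)) (exp (-(lam + mu) * t) * -(lam + mu)) t :=
    ((hasDerivAt_id t).const_mul _).exp.congr_deriv (by simp)
  have hB : HasDerivAt (fun u => besselImageSum N k n (2 * u * s))
      ((besselImageSum N k (n - 1) (2 * t * s) + besselImageSum N k (n + 1) (2 * t * s)) / 2
        * (2 * s)) t :=
    (hasDerivAt_besselImageSum hN k n _).comp t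
      (((hasDerivAt_id t).const_mul 2).mul_const s |>.congr_deriv (by simp))
  refine ((hE.mul_const _).mul hB).congr_deriv ?_
  have hpred :
      r ^ ((((n - 1 : ℤ) : ℝ) - k) / 2) = r ^ (((n : ℝ) - k) / 2) * r ^ (-(1 / 2) : ℝ) := by
    rw [← Real.rpow_add hr]; push_cast; ring_nf
  have hsucc :
      r ^ ((((n + 1 : ℤ) : ℝ) - k) / 2) = r ^ (((n : ℝ) - k) / 2) * r ^ (1 / 2 : ℝ) := by
    rw [← Real.rpow_add hr]; push_cast; ring_nf
  rw [hpred, hsucc]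
  linear_combination -(exp (-(lam + mu) * t) * r ^ (((n : ℝ) - k) / 2)) *
    (besselImageSum N k (n - 1) (2 * t * s) * mul_div_rpow_neg_half hlam hmu +
      besselImageSum N k (n + 1) (2 * t * s) * mul_div_rpow_half hlam hmu)

theorem pconst_apply_zero (lam mu : ℝ) {N : ℕ} {k n : ℤ} (hk : 1 ≤ k) (hkN : k ≤ N - 1)
    (hn : 1 ≤ n) (hnN : n ≤ N - 1) : pconst lam mu N k n 0 = if k = n then 1 else 0 := by
  rw [pconst_eq_besselImageSum lam mu (by omega)]
  simp only [mul_zero, zero_mul, exp_zero, one_mul, besselImageSum_apply_zero hk hkN hn hnN]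
  split_ifs with h <;> simp [h]

theorem pconst_solves_forward_equations
    (lam mu : ℝ) (hlam : 0 < lam) (hmu : 0 < mu) (N : ℕ) (hN : 1 < N) :
    (∀ k n : ℤ, 1 ≤ k → k ≤ (N : ℤ) - 1 → 2 ≤ n → n ≤ (N : ℤ) - 2 → ∀ t : ℝ,
      HasDerivAt (fun u => pconst lam mu N k n u)
        (lam * pconst lam mu N k (n - 1) t - (lam + mu) * pconst lam mu N k n t +
          mu * pconst lam mu N k (n + 1) t) t) ∧
    (∀ k n : ℤ, 1 ≤ k → k ≤ (N : ℤ) - 1 → 1 ≤ n → n ≤ (N : ℤ) - 1 →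
      pconst lam mu N k n 0 = if k = n then 1 else 0) :=
  ⟨fun k n _ _ _ _ t => hasDerivAt_pconst hlam hmu (by omega) k n t,
    fun _ _ hk hkN hn hnN => pconst_apply_zero lam mu hk hkN hn hnN⟩
end

section
/- Under the condition λ₁/λ₂ = μ₂/μ₁ = ξ for the two-dimensional birth-death process on ℤ² with constant rates, the taboo probability relative to the line x₂ = x₁ + r satisfies P^⟨r⟩(n, t | k) = P(n, t | k) − ξ^{n₁+r−n₂} P(n₂−r, n₁+r, t | k), for n₂ < n₁+r, k₂ < k₁+r or for n₂ > n₁+r, k₂ > k₁+r. -/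
theorem taboo_probability_line
    (xi : ℝ) (hxi : 0 < xi) (r : ℤ)
    (P : ℤ → ℤ → ℤ → ℤ → ℝ → ℝ)  -- P k1 k2 n1 n2 t
    -- quasi-symmetry with respect to the line x₂ = x₁ + r:
    (hsymm : ∀ k1 k2 n1 n2 : ℤ, ∀ t : ℝ,
      P (k2 - r) (k1 + r) (n2 - r) (n1 + r) t =
        xi ^ (n2 - k2 - n1 + k1) * P k1 k2 n1 n2 t)
    (k1 k2 : ℤ) (hk : k2 ≠ k1 + r)
    (g : ℤ → ℝ → ℝ)  -- first-passage location sub-density on the line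
    -- continuity equation for sample paths crossing the line:
    (hcont : ∀ n1 n2 : ℤ, ((k2 < k1 + r ∧ n1 + r ≤ n2) ∨ (k1 + r < k2 ∧ n2 ≤ n1 + r)) →
      ∀ t : ℝ, 0 ≤ t →
      P k1 k2 n1 n2 t =
        ∫ τ in (0:ℝ)..t, ∑' x : ℤ, g x τ * P x (x + r) n1 n2 (t - τ))
    (Ptab : ℤ → ℤ → ℝ → ℝ)
    -- the taboo probability:
    (htab : ∀ n1 n2 : ℤ, ∀ t : ℝ, 0 ≤ t →
      Ptab n1 n2 t = P k1 k2 n1 n2 t -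
        ∫ τ in (0:ℝ)..t, ∑' x : ℤ, g x τ * P x (x + r) n1 n2 (t - τ)) :
    ∀ n1 n2 : ℤ, ((n2 < n1 + r ∧ k2 < k1 + r) ∨ (n1 + r < n2 ∧ k1 + r < k2)) →
      ∀ t : ℝ, 0 ≤ t →
      Ptab n1 n2 t = P k1 k2 n1 n2 t - xi ^ (n1 + r - n2) * P k1 k2 (n2 - r) (n1 + r) t := by
  intro n1 n2 hn t ht
  have hxne : xi ≠ 0 := ne_of_gt hxi
  have hs : ∀ x : ℤ, ∀ s : ℝ, P x (x + r) (n2 - r) (n1 + r) s =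
      xi ^ (n2 - n1 - r) * P x (x + r) n1 n2 s := by
    intro x s
    have h := hsymm x (x + r) n1 n2 s
    have e1 : x + r - r = x := by ring
    have e2 : n2 - (x + r) - n1 + x = n2 - n1 - r := by ring
    rw [e1, e2] at h
    exact h
  have key : P k1 k2 (n2 - r) (n1 + r) t =
      xi ^ (n2 - n1 - r) * ∫ τ in (0:ℝ)..t, ∑' x : ℤ, g x τ * P x (x + r) n1 n2 (t - τ) := by
    have hcond : (k2 < k1 + r ∧ (n2 - r) + r ≤ n1 + r) ∨ (k1 + r < k2 ∧ n1 + r ≤ (n2 - r) + r) := by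
      rcases hn with ⟨h1, h2⟩ | ⟨h1, h2⟩
      · left; omega
      · right; omega
    have hc := hcont (n2 - r) (n1 + r) hcond t ht
    rw [hc, ← intervalIntegral.integral_const_mul]
    apply intervalIntegral.integral_congr
    intro τ _
    simp only [hs, mul_left_comm (g _ τ)]
    rw [tsum_mul_left]
  rw [htab n1 n2 t ht, key, ← mul_assoc, ← zpow_add₀ hxne]
  have : n1 + r - n2 + (n2 - n1 - r) = 0 := by ring
  rw [this, zpow_zero, one_mul]
end

section
/- For the two-dimensional birth-death process on ℤ² with constant rates satisfying λ₁/λ₂ = μ₂/μ₁ = ξ, and k with k₂ ≠ k₁+r, the first-passage density through the line x₂ = x₁+r satisfies the quasi-symmetry h_r(t | k₂−r, k₁+r) = ξ^{k₁+r−k₂} h_r(t | k), where h_r(t|k) = (|k₂−k₁−r|/t) P{X₂(t) = X₁(t)+r | X(0)=k}. -/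
/-- Transition probabilities of the two-dimensional birth-death process on `ℤ²`
with constant rates. -/
noncomputable def P2 (lam1 mu1 lam2 mu2 : ℝ) (k1 k2 n1 n2 : ℤ) (t : ℝ) : ℝ :=
  (Real.exp (-(lam1 + mu1) * t) * besselI (n1 - k1) (2 * Real.sqrt (lam1 * mu1) * t) *
      (lam1 / mu1) ^ (((n1 : ℝ) - (k1 : ℝ)) / 2)) *
  (Real.exp (-(lam2 + mu2) * t) * besselI (n2 - k2) (2 * Real.sqrt (lam2 * mu2) * t) *
      (lam2 / mu2) ^ (((n2 : ℝ) - (k2 : ℝ)) / 2))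

/-- The first-passage-time density through the line `x₂ = x₁ + r`:
`h_r(t|k) = (|k₂−k₁−r|/t) · P{X₂(t) = X₁(t)+r | X(0)=k}`. -/
noncomputable def hFPT (lam1 mu1 lam2 mu2 : ℝ) (r k1 k2 : ℤ) (t : ℝ) : ℝ :=
  ((|k2 - k1 - r| : ℤ) : ℝ) / t * ∑' x : ℤ, P2 lam1 mu1 lam2 mu2 k1 k2 x (x + r) t

/-! Reflecting the starting point across the line `x₂ = x₁ + r` swaps the displacements of the two
coordinates needed to reach a point `(x, x + r)`. Since `λ₁μ₁ = λ₂μ₂`, the exponential and Bessel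
factors of the two one-dimensional kernels are unchanged by this swap; only the drift factors
`(λᵢ/μᵢ)^{j/2}` change, and because `λ₁/μ₁ = ξ² λ₂/μ₂` they change by `ξ^{k₁+r−k₂}` uniformly in `x`. -/

noncomputable def birthDeathKernel (lam mu : ℝ) (j : ℤ) (t : ℝ) : ℝ :=
  Real.exp (-(lam + mu) * t) * besselI j (2 * Real.sqrt (lam * mu) * t) *
    (lam / mu) ^ ((j : ℝ) / 2)

lemma P2_eq_birthDeathKernel_mul (lam1 mu1 lam2 mu2 : ℝ) (k1 k2 n1 n2 : ℤ) (t : ℝ) :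
    P2 lam1 mu1 lam2 mu2 k1 k2 n1 n2 t =
      birthDeathKernel lam1 mu1 (n1 - k1) t * birthDeathKernel lam2 mu2 (n2 - k2) t := by
  simp only [P2, birthDeathKernel, Int.cast_sub]

lemma rpow_half_mul_swap {ξ q : ℝ} (hξ : 0 < ξ) (hq : 0 ≤ q) (e d : ℤ) :
    (ξ ^ 2 * q) ^ ((e : ℝ) / 2) * q ^ ((d : ℝ) / 2) =
      ξ ^ (e - d) * ((ξ ^ 2 * q) ^ ((d : ℝ) / 2) * q ^ ((e : ℝ) / 2)) := by
  have hsq : ∀ s : ℝ, (ξ ^ 2 * q) ^ s = ξ ^ (2 * s) * q ^ s := fun s => by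
    rw [Real.mul_rpow (by positivity) hq, ← Real.rpow_natCast_mul hξ.le]
    norm_num
  have hξ_pow : ξ ^ (2 * ((e : ℝ) / 2)) = ξ ^ (e - d) * ξ ^ (2 * ((d : ℝ) / 2)) := by
    rw [← Real.rpow_intCast, ← Real.rpow_add hξ]
    push_cast
    ring_nf
  rw [hsq, hsq, hξ_pow]
  ring

lemma birthDeathKernel_mul_swap {lam1 mu1 lam2 mu2 ξ : ℝ} (hξ : 0 < ξ) (hq : 0 ≤ lam2 / mu2)
    (hlam : lam1 = ξ * lam2) (hmu : mu2 = ξ * mu1) (e d : ℤ) (t : ℝ) :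
    birthDeathKernel lam1 mu1 e t * birthDeathKernel lam2 mu2 d t =
      ξ ^ (e - d) * (birthDeathKernel lam1 mu1 d t * birthDeathKernel lam2 mu2 e t) := by
  have hprod : lam1 * mu1 = lam2 * mu2 := by rw [hlam, hmu]; ring
  have hratio : lam1 / mu1 = ξ ^ 2 * (lam2 / mu2) := by
    rw [hlam, hmu]; field_simp
  simp only [birthDeathKernel, hprod, hratio]
  linear_combination (Real.exp (-(lam1 + mu1) * t) * Real.exp (-(lam2 + mu2) * t) *
    besselI e (2 * Real.sqrt (lam2 * mu2) * t) * besselI d (2 * Real.sqrt (lam2 * mu2) * t)) *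
    rpow_half_mul_swap hξ hq e d

lemma P2_reflect_across_line {lam1 mu1 lam2 mu2 ξ : ℝ} (hξ : 0 < ξ) (hq : 0 ≤ lam2 / mu2)
    (hlam : lam1 = ξ * lam2) (hmu : mu2 = ξ * mu1) (r k1 k2 x : ℤ) (t : ℝ) :
    P2 lam1 mu1 lam2 mu2 (k2 - r) (k1 + r) x (x + r) t =
      ξ ^ (k1 + r - k2) * P2 lam1 mu1 lam2 mu2 k1 k2 x (x + r) t := by
  rw [P2_eq_birthDeathKernel_mul, P2_eq_birthDeathKernel_mul,
    show x - (k2 - r) = x + r - k2 by ring, show x + r - (k1 + r) = x - k1 by ring,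
    birthDeathKernel_mul_swap hξ hq hlam hmu, show x + r - k2 - (x - k1) = k1 + r - k2 by ring]

theorem fpt_line_quasi_symmetry_general
    (lam1 mu1 lam2 mu2 xi : ℝ)
    (h2 : 0 < mu1) (h3 : 0 < lam2) (h4 : 0 < mu2) (hxi : 0 < xi)
    (hl : lam1 / lam2 = xi) (hm : mu2 / mu1 = xi)
    (r k1 k2 : ℤ) :
    ∀ t : ℝ, 0 < t →
      hFPT lam1 mu1 lam2 mu2 r (k2 - r) (k1 + r) t =
        xi ^ (k1 + r - k2) * hFPT lam1 mu1 lam2 mu2 r k1 k2 t := by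
  intro t _
  have hlam : lam1 = xi * lam2 := by rw [← hl, div_mul_cancel₀ _ h3.ne']
  have hmu : mu2 = xi * mu1 := by rw [← hm, div_mul_cancel₀ _ h2.ne']
  have hq : 0 ≤ lam2 / mu2 := (div_pos h3 h4).le
  simp only [hFPT, P2_reflect_across_line hxi hq hlam hmu, tsum_mul_left]
  rw [show k1 + r - (k2 - r) - r = -(k2 - k1 - r) by ring, abs_neg]
  ring

theorem fpt_line_quasi_symmetry
    (lam1 mu1 lam2 mu2 xi : ℝ)
    (h1 : 0 < lam1) (h2 : 0 < mu1) (h3 : 0 < lam2) (h4 : 0 < mu2) (hxi : 0 < xi)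
    (hl : lam1 / lam2 = xi) (hm : mu2 / mu1 = xi)
    (r k1 k2 : ℤ) (hk : k2 ≠ k1 + r) :
    ∀ t : ℝ, 0 < t →
      hFPT lam1 mu1 lam2 mu2 r (k2 - r) (k1 + r) t =
        xi ^ (k1 + r - k2) * hFPT lam1 mu1 lam2 mu2 r k1 k2 t :=
  fpt_line_quasi_symmetry_general lam1 mu1 lam2 mu2 xi h2 h3 h4 hxi hl hm r k1 k2
end
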